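/- arXiv:2501.07128 — 2 statements merged into one kernel-verified Lean document; each statement's English description precedes it below -/
import Mathlib

section
/- A feasible point x* is Pareto optimal if and only if for every index l ∈ {1,...,k}, x* solves the ε-constraint problem minimizing f_l over {x ∈ S : f_j(x) ≤ f_j(x*) for all j ≠ l}. -/
theorem pareto_iff_eps_constraint {α : Type*} {k : ℕ} (S : Set α)
    (f : Fin k → α → ℝ) (xstar : α) (hxS : xstar ∈ S) :
    (¬ ∃ x ∈ S, (∀ i, f i x ≤ f i xstar) ∧ ∃ j, f j x < f j xstar) ↔
    (∀ l : Fin k, ∀ x ∈ S, (∀ j, j ≠ l → f j x ≤ f j xstar) → f l xstar ≤ f l x) := by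
  constructor
  · intro h l x hx hcon
    by_contra hlt
    push_neg at hlt
    exact h ⟨x, hx, fun i => by
      by_cases hi : i = l
      · exact hi ▸ hlt.le
      · exact hcon i hi, l, hlt⟩
  · rintro h ⟨x, hx, hall, j, hj⟩
    exact absurd (h j x hx fun i _ => hall i) (not_le.mpr hj)
end

section
/- If the set of attainable objective vectors is convex, then every Pareto optimal point of a biobjective problem is a minimizer of λ f_1 + (1−λ) f_2 over S for some λ ∈ [0,1]. -/
theorem convex_pareto_scalarization {α : Type*} (S : Set α) (hne : S.Nonempty)
    (f₁ f₂ : α → ℝ)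
    (hconv : Convex ℝ {p : ℝ × ℝ | ∃ x ∈ S, ∃ r s : ℝ, 0 ≤ r ∧ 0 ≤ s ∧
      p = (f₁ x + r, f₂ x + s)})
    (xstar : α) (hxS : xstar ∈ S)
    (hpareto : ¬ ∃ x ∈ S, (f₁ x ≤ f₁ xstar ∧ f₂ x ≤ f₂ xstar) ∧
      (f₁ x < f₁ xstar ∨ f₂ x < f₂ xstar)) :
    ∃ lam : ℝ, 0 ≤ lam ∧ lam ≤ 1 ∧
      ∀ x ∈ S, lam * f₁ xstar + (1 - lam) * f₂ xstar ≤ lam * f₁ x + (1 - lam) * f₂ x := by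
  set Y : Set (ℝ × ℝ) := {p : ℝ × ℝ | ∃ x ∈ S, ∃ r s : ℝ, 0 ≤ r ∧ 0 ≤ s ∧
      p = (f₁ x + r, f₂ x + s)} with hY
  set c₁ := f₁ xstar
  set c₂ := f₂ xstar
  set Q : Set (ℝ × ℝ) := Set.Iio c₁ ×ˢ Set.Iio c₂ with hQ
  have hQconv : Convex ℝ Q := (convex_Iio c₁).prod (convex_Iio c₂)
  have hQopen : IsOpen Q := (isOpen_Iio).prod (isOpen_Iio)
  have hdisj : Disjoint Q Y := by
    rw [Set.disjoint_left]
    rintro p ⟨h1, h2⟩ ⟨x, hx, r, s, hr, hs, hp⟩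
    exact hpareto ⟨x, hx, ⟨by rw [hp] at h1; simp at h1; linarith,
      by rw [hp] at h2; simp at h2; linarith⟩,
      Or.inl (by rw [hp] at h1; simp at h1; linarith)⟩
  obtain ⟨f, u, hQu, hYu⟩ := geometric_hahn_banach_open hQconv hQopen hconv hdisj
  set a := f (1, 0) with ha
  set b := f (0, 1) with hb
  have feval : ∀ p : ℝ × ℝ, f p = p.1 * a + p.2 * b := by
    intro p
    have hp : p = p.1 • ((1:ℝ), (0:ℝ)) + p.2 • ((0:ℝ), (1:ℝ)) := by
      ext <;> simp
    rw [hp, map_add, map_smul, map_smul, smul_eq_mul, smul_eq_mul]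
    simp [ha, hb]
  -- points of Q give: for ε, t > 0, (c₁ - t)*a + (c₂ - ε)*b < u
  have hquad : ∀ t ε : ℝ, 0 < t → 0 < ε → (c₁ - t) * a + (c₂ - ε) * b < u := by
    intro t ε ht hε
    have : ((c₁ - t, c₂ - ε) : ℝ × ℝ) ∈ Q := by
      constructor <;> simp <;> linarith
    have := hQu _ this
    rwa [feval] at this
  have hanneg : 0 ≤ a := by
    by_contra h
    push_neg at h
    have key := hquad (max 1 ((u - c₁ * a - (c₂ - 1) * b + 1) / (-a))) 1 (by positivity) one_pos
    set t := max 1 ((u - c₁ * a - (c₂ - 1) * b + 1) / (-a))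
    have ht : (u - c₁ * a - (c₂ - 1) * b + 1) / (-a) ≤ t := le_max_right _ _
    have hna : 0 < -a := by linarith
    rw [div_le_iff₀ hna] at ht
    nlinarith
  have hbnneg : 0 ≤ b := by
    by_contra h
    push_neg at h
    have key := hquad 1 (max 1 ((u - c₂ * b - (c₁ - 1) * a + 1) / (-b))) one_pos (by positivity)
    set t := max 1 ((u - c₂ * b - (c₁ - 1) * a + 1) / (-b))
    have ht : (u - c₂ * b - (c₁ - 1) * a + 1) / (-b) ≤ t := le_max_right _ _
    have hnb : 0 < -b := by linarith
    rw [div_le_iff₀ hnb] at ht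
    nlinarith
  have hcorner : ∀ x ∈ S, u ≤ f₁ x * a + f₂ x * b := by
    intro x hx
    have : ((f₁ x, f₂ x) : ℝ × ℝ) ∈ Y := ⟨x, hx, 0, 0, le_refl _, le_refl _, by simp⟩
    have := hYu _ this
    rwa [feval] at this
  have hab : 0 < a + b := by
    rcases lt_or_eq_of_le hanneg with h | h
    · linarith
    rcases lt_or_eq_of_le hbnneg with h' | h'
    · linarith
    exfalso
    have h1 := hquad 1 1 one_pos one_pos
    have h2 := hcorner xstar hxS
    rw [← h, ← h'] at h1 h2
    simp at h1 h2
    linarith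
  -- corner value ≤ u
  have hcle : c₁ * a + c₂ * b ≤ u := by
    by_contra h
    push_neg at h
    set ε := (c₁ * a + c₂ * b - u) / (2 * (a + b)) with hε
    have hεpos : 0 < ε := by
      apply div_pos (by linarith) (by linarith)
    have key := hquad ε ε hεpos hεpos
    have heq : ε * (a + b) = (c₁ * a + c₂ * b - u) / 2 := by
      rw [hε]; field_simp
    nlinarith [key, heq]
  refine ⟨a / (a + b), by positivity, ?_, ?_⟩
  · rw [div_le_one hab]; linarith
  · intro x hx
    have hkey : c₁ * a + c₂ * b ≤ f₁ x * a + f₂ x * b := le_trans hcle (hcorner x hx)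
    have h1ml : 1 - a / (a + b) = b / (a + b) := by field_simp; ring
    rw [h1ml, div_mul_eq_mul_div, div_mul_eq_mul_div, div_mul_eq_mul_div, div_mul_eq_mul_div,
      ← add_div, ← add_div, div_le_div_iff₀ hab hab]
    nlinarith
end
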